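/- arXiv:2604.26387 — 2 statements merged into one kernel-verified Lean document; each statement's English description precedes it below -/
import Mathlib

section
/- For each integer d ≥ 0, the number of polynomials u ∈ 𝔽₂[z] with deg(u) = d, u(0) = 1, and gcd(u, ũ) = 1 (where ũ(z) = z^d u(1/z)) equals 1 if d = 0; 0 if d = 1 or d = 2; and (2^{d−1} − 2·(−1)^d)/3 if d ≥ 3. -/
/-!
Write `N_d`, `S_d`, `A_d` for the numbers of `u ∈ 𝔽₂[z]` of degree `d` with `u(0) = 1` that are
arbitrary, self-reciprocal (`ũ = u`), and coprime to `ũ`, respectively. Every such `u` factors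
uniquely as `u = g v` with `g = gcd(u, ũ)` self-reciprocal and `v` coprime to `ṽ`, because
`gcd(g v, g ṽ) = g gcd(v, ṽ)`. Hence `N(x) = S(x) A(x)` for the generating functions.
A self-reciprocal polynomial is determined by its lower half, so `S_d = 2^⌊d/2⌋` and
`S(x) (1 - 2x²) = 1 + x`; with `N_d = 2^(d-1)` this gives `A(x) (1 + x) = N(x) (1 - 2x²)`, which
the closed form also satisfies.
-/

open Polynomial

def Fin.tailSubtypeEquiv {α : Type*} (n : ℕ) (a : α) :
    {φ : Fin (n + 1) → α // φ 0 = a} ≃ (Fin n → α) where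
  toFun φ := Fin.tail φ.1
  invFun ψ := ⟨Fin.cons (α := fun _ ↦ α) a ψ, Fin.cons_zero _ _⟩
  left_inv := by
    rintro ⟨φ, rfl⟩
    exact Subtype.ext (Fin.cons_self_tail φ)
  right_inv ψ := by simp

lemma ZMod.eq_one_of_ne_zero_mod_two {a : ZMod 2} (h : a ≠ 0) : a = 1 := by
  revert a
  decide

lemma gcd_eq_one_iff_isCoprime {R : Type*} [CommRing R] [IsDomain R] [IsPrincipalIdealRing R]
    [NormalizedGCDMonoid R] {a b : R} : gcd a b = 1 ↔ IsCoprime a b := by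
  rw [← gcd_isUnit_iff, ← normalize_eq_one, normalize_gcd]

namespace Polynomial

def constOneLE (R : Type*) [Semiring R] (n : ℕ) : Set R[X] :=
  {h | h.natDegree ≤ n ∧ h.coeff 0 = 1}

def constOneOfDegree (R : Type*) [Semiring R] (d : ℕ) : Set R[X] :=
  {u | u.natDegree = d ∧ u.coeff 0 = 1}

def selfReverse (R : Type*) [Semiring R] (d : ℕ) : Set R[X] :=
  {g | g.natDegree = d ∧ g.coeff 0 = 1 ∧ g.reverse = g}

def coprimeReverse (R : Type*) [CommSemiring R] (d : ℕ) : Set R[X] :=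
  {u | u.natDegree = d ∧ u.coeff 0 = 1 ∧ IsCoprime u u.reverse}

section Semiring

variable {R : Type*} [Semiring R]

lemma reverse_eq_mirror_of_coeff_zero_ne_zero {p : R[X]} (h : p.coeff 0 ≠ 0) :
    p.reverse = p.mirror := by
  rw [mirror, natTrailingDegree_eq_zero.mpr (Or.inr h), pow_zero, mul_one]

lemma natDegree_reverse_of_coeff_zero_ne_zero {p : R[X]} (h : p.coeff 0 ≠ 0) :
    p.reverse.natDegree = p.natDegree := by
  rw [reverse_eq_mirror_of_coeff_zero_ne_zero h, mirror_natDegree]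

lemma reverse_reverse_of_coeff_zero_ne_zero {p : R[X]} (h : p.coeff 0 ≠ 0) :
    p.reverse.reverse = p := by
  have hp : p ≠ 0 := fun hp ↦ h (by simp [hp])
  have h' : p.reverse.coeff 0 ≠ 0 := by
    rwa [coeff_zero_reverse, Ne, leadingCoeff_eq_zero]
  rw [reverse_eq_mirror_of_coeff_zero_ne_zero h', reverse_eq_mirror_of_coeff_zero_ne_zero h,
    mirror_mirror]

lemma reverse_dvd_reverse [NoZeroDivisors R] {p q : R[X]} (h : p ∣ q) :
    p.reverse ∣ q.reverse := by
  obtain ⟨c, rfl⟩ := h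
  exact ⟨c.reverse, reverse_mul_of_domain p c⟩

lemma coeff_zero_ne_zero_of_dvd {p q : R[X]} (h : p ∣ q)
    (hq : q.coeff 0 ≠ 0) : p.coeff 0 ≠ 0 := by
  obtain ⟨c, rfl⟩ := h
  rw [mul_coeff_zero] at hq
  exact left_ne_zero_of_mul hq

lemma ne_zero_of_coeff_zero_eq_one [Nontrivial R] {p : R[X]}
    (h : p.coeff 0 = 1) : p ≠ 0 := by
  rintro rfl
  rw [coeff_zero] at h
  exact zero_ne_one h

noncomputable def palindromize (k : ℕ) (h : R[X]) : R[X] :=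
  PowerSeries.trunc (k + 1) (PowerSeries.mk fun j ↦ h.coeff (min j (k - j)))

lemma coeff_palindromize (k : ℕ) (h : R[X]) (j : ℕ) :
    (palindromize k h).coeff j = if j ≤ k then h.coeff (min j (k - j)) else 0 := by
  simp [palindromize, PowerSeries.coeff_trunc]

lemma natDegree_palindromize_le (k : ℕ) (h : R[X]) : (palindromize k h).natDegree ≤ k :=
  natDegree_le_iff_coeff_eq_zero.mpr fun j hj ↦ by
    rw [coeff_palindromize, if_neg (by exact_mod_cast hj.not_ge)]

lemma reflect_palindromize (k : ℕ) (h : R[X]) :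
    reflect k (palindromize k h) = palindromize k h := by
  ext j
  rw [coeff_reflect, coeff_palindromize, coeff_palindromize]
  rcases le_or_gt j k with hj | hj
  · rw [revAt_le hj, if_pos (Nat.sub_le k j), if_pos hj, min_comm, Nat.sub_sub_self hj]
  · rw [revAt_eq_self_of_lt hj]

lemma palindromize_of_reflect_eq {g : R[X]} {k : ℕ} (hg : g.natDegree ≤ k)
    (hr : reflect k g = g) : palindromize k g = g := by
  ext j
  rw [coeff_palindromize]
  split_ifs with hj
  · rcases le_total j (k - j) with h | h
    · rw [min_eq_left h]
    · conv_rhs => rw [← hr, coeff_reflect, revAt_le hj]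
      rw [min_eq_right h]
  · exact (coeff_eq_zero_of_natDegree_lt (by omega)).symm

lemma coeff_trunc_coe (n j : ℕ) (g : R[X]) :
    (PowerSeries.trunc n (g : PowerSeries R)).coeff j = if j < n then g.coeff j else 0 := by
  rw [PowerSeries.coeff_trunc, coeff_coe]

lemma mem_degreeLT_succ {n : ℕ} {h : R[X]} : h ∈ degreeLT R (n + 1) ↔ h.natDegree ≤ n := by
  rw [degreeLT_succ_eq_degreeLE, mem_degreeLE, natDegree_le_iff_degree_le]

noncomputable def constOneLEEquiv (n : ℕ) :
    constOneLE R n ≃ {φ : Fin (n + 1) → R // φ 0 = 1} :=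
  calc constOneLE R n ≃ {h : R[X] // h ∈ degreeLT R (n + 1) ∧ h.coeff 0 = 1} :=
        Equiv.subtypeEquivRight fun _ ↦ and_congr_left' mem_degreeLT_succ.symm
    _ ≃ {p : degreeLT R (n + 1) // (p : R[X]).coeff 0 = 1} :=
        (Equiv.subtypeSubtypeEquivSubtypeInter _ _).symm
    _ ≃ {φ : Fin (n + 1) → R // φ 0 = 1} :=
        Equiv.subtypeEquiv (degreeLTEquiv R (n + 1)).toEquiv fun _ ↦ Iff.rfl

lemma card_constOneLE (n : ℕ) : Nat.card (constOneLE R n) = Nat.card R ^ n := by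
  rw [Nat.card_congr ((constOneLEEquiv n).trans (Fin.tailSubtypeEquiv n 1)), Nat.card_fun,
    Nat.card_fin]

lemma trunc_mem_constOneLE {g : R[X]} (hg : g.coeff 0 = 1) (n : ℕ) :
    PowerSeries.trunc (n + 1) (g : PowerSeries R) ∈ constOneLE R n :=
  ⟨Nat.lt_succ_iff.mp (PowerSeries.natDegree_trunc_lt _ n),
    by rw [coeff_trunc_coe, if_pos n.succ_pos, hg]⟩

lemma palindromize_mem_selfReverse [Nontrivial R] {h : R[X]} (hh : h.coeff 0 = 1) (k : ℕ) :
    palindromize k h ∈ selfReverse R k := by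
  have hk : (palindromize k h).natDegree = k := by
    refine natDegree_eq_of_le_of_coeff_ne_zero (natDegree_palindromize_le k h) ?_
    rw [coeff_palindromize, if_pos le_rfl, Nat.sub_self, min_zero, hh]
    exact one_ne_zero
  refine ⟨hk, ?_, ?_⟩
  · rw [coeff_palindromize, if_pos (Nat.zero_le k), zero_min, hh]
  · rw [reverse, hk, reflect_palindromize]

lemma palindromize_trunc {g : R[X]} {k : ℕ} (hg : g ∈ selfReverse R k) :
    palindromize k (PowerSeries.trunc (k / 2 + 1) (g : PowerSeries R)) = g := by
  obtain ⟨hk, -, hr⟩ := hg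
  conv_rhs => rw [← palindromize_of_reflect_eq hk.le (hk ▸ hr)]
  ext j
  simp only [coeff_palindromize, coeff_trunc_coe]
  split_ifs <;> first | rfl | omega

lemma trunc_palindromize {h : R[X]} {k : ℕ} (hh : h.natDegree ≤ k / 2) :
    PowerSeries.trunc (k / 2 + 1) (palindromize k h : PowerSeries R) = h := by
  ext j
  rw [coeff_trunc_coe, coeff_palindromize]
  split_ifs with h1 h2
  · rw [min_eq_left (by omega)]
  · omega
  · exact (coeff_eq_zero_of_natDegree_lt (by omega)).symm

noncomputable def selfReverseEquiv [Nontrivial R] (k : ℕ) :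
    selfReverse R k ≃ constOneLE R (k / 2) where
  toFun g := ⟨_, trunc_mem_constOneLE g.2.2.1 (k / 2)⟩
  invFun h := ⟨_, palindromize_mem_selfReverse h.2.2 k⟩
  left_inv g := Subtype.ext (palindromize_trunc g.2)
  right_inv h := Subtype.ext (trunc_palindromize h.2.1)

lemma card_selfReverse [Nontrivial R] (k : ℕ) :
    Nat.card (selfReverse R k) = Nat.card R ^ (k / 2) := by
  rw [Nat.card_congr (selfReverseEquiv k), card_constOneLE]

lemma constOneOfDegree_zero : constOneOfDegree R 0 = {1} := by
  ext u
  refine ⟨fun ⟨hd, h0⟩ ↦ ?_, ?_⟩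
  · rw [Set.mem_singleton_iff, eq_C_of_natDegree_eq_zero hd, h0, C_1]
  · rintro rfl
    exact ⟨natDegree_one, coeff_one_zero⟩

end Semiring

instance {R : Type*} [Semiring R] [Finite R] (n : ℕ) : Finite (constOneLE R n) :=
  .of_equiv _ ((constOneLEEquiv n).trans (Fin.tailSubtypeEquiv n 1)).symm

instance {R : Type*} [Semiring R] [Finite R] (d : ℕ) : Finite (selfReverse R d) :=
  Finite.Set.subset (constOneLE R d) fun _ hg ↦ ⟨hg.1.le, hg.2.1⟩

instance {R : Type*} [CommSemiring R] [Finite R] (d : ℕ) : Finite (coprimeReverse R d) :=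
  Finite.Set.subset (constOneLE R d) fun _ hu ↦ ⟨hu.1.le, hu.2.1⟩

lemma monic_of_ne_zero_mod_two {p : (ZMod 2)[X]} (hp : p ≠ 0) : p.Monic :=
  ZMod.eq_one_of_ne_zero_mod_two (leadingCoeff_ne_zero.mpr hp)

lemma normalize_eq_self_mod_two (p : (ZMod 2)[X]) : normalize p = p := by
  rcases eq_or_ne p 0 with rfl | hp
  · exact normalize_zero
  · exact (monic_of_ne_zero_mod_two hp).normalize_eq_self

noncomputable def constOneOfDegreeSuccEquiv (d : ℕ) :
    constOneOfDegree (ZMod 2) (d + 1) ≃ constOneLE (ZMod 2) d where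
  toFun u := ⟨u.1.eraseLead,
    (eraseLead_natDegree_le _).trans_eq (by rw [u.2.1, Nat.add_sub_cancel]),
    (eraseLead_coeff_of_ne 0 (by rw [u.2.1]; omega)).trans u.2.2⟩
  invFun v := ⟨v.1 + X ^ (d + 1), by
      rw [natDegree_add_eq_right_of_natDegree_lt (by simpa using Nat.lt_succ_of_le v.2.1),
        natDegree_X_pow],
    by simp [v.2.2]⟩
  left_inv u := by
    obtain ⟨u, hd, h0⟩ := u
    refine Subtype.ext (show u.eraseLead + X ^ (d + 1) = u from ?_)
    conv_rhs => rw [← eraseLead_add_monomial_natDegree_leadingCoeff u]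
    rw [(monic_of_ne_zero_mod_two (ne_zero_of_coeff_zero_eq_one h0)).leadingCoeff, hd,
      monomial_one_right_eq_X_pow]
  right_inv v := Subtype.ext <| show (v.1 + X ^ (d + 1)).eraseLead = v.1 by
    rw [eraseLead_add_of_natDegree_lt_right (by simpa using Nat.lt_succ_of_le v.2.1),
      eraseLead_X_pow, add_zero]

lemma card_constOneOfDegree (d : ℕ) :
    Nat.card (constOneOfDegree (ZMod 2) d) = if d = 0 then 1 else 2 ^ (d - 1) := by
  cases d with
  | zero => simp [constOneOfDegree_zero]
  | succ d =>
    rw [Nat.card_congr (constOneOfDegreeSuccEquiv d), card_constOneLE, Nat.card_zmod]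
    simp

lemma gcd_mul_reverse_of_reverse_eq {g : (ZMod 2)[X]} (hg : g.reverse = g) (v : (ZMod 2)[X]) :
    gcd (g * v) (g * v).reverse = g * gcd v v.reverse := by
  rw [reverse_mul_of_domain, hg, gcd_mul_left, normalize_eq_self_mod_two]

lemma reverse_gcd_self_reverse {u : (ZMod 2)[X]} (hu : u.coeff 0 ≠ 0) :
    (gcd u u.reverse).reverse = gcd u u.reverse := by
  set g := gcd u u.reverse
  have hg0 : g.coeff 0 ≠ 0 := coeff_zero_ne_zero_of_dvd (gcd_dvd_left _ _) hu
  have hg : g ≠ 0 := fun h ↦ hg0 (by rw [h, coeff_zero])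
  have hdvd : g.reverse ∣ g := by
    refine dvd_gcd ?_ (reverse_dvd_reverse (gcd_dvd_left _ _))
    simpa only [reverse_reverse_of_coeff_zero_ne_zero hu] using
      reverse_dvd_reverse (gcd_dvd_right u u.reverse)
  exact (eq_of_monic_of_dvd_of_natDegree_le
    (monic_of_ne_zero_mod_two (mt reverse_eq_zero.mp hg)) (monic_of_ne_zero_mod_two hg) hdvd
    (natDegree_reverse_of_coeff_zero_ne_zero hg0).ge).symm

open Finset in
noncomputable def mulSelfReverseCoprime (d : ℕ) :
    (Σ p : antidiagonal d, selfReverse (ZMod 2) p.1.1 × coprimeReverse (ZMod 2) p.1.2) →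
      constOneOfDegree (ZMod 2) d
  | ⟨⟨_, hp⟩, g, v⟩ => ⟨g * v, by
      rw [natDegree_mul (ne_zero_of_coeff_zero_eq_one g.2.2.1)
        (ne_zero_of_coeff_zero_eq_one v.2.2.1), g.2.1, v.2.1, mem_antidiagonal.mp hp],
      by rw [mul_coeff_zero, g.2.2.1, v.2.2.1, one_mul]⟩

lemma mulSelfReverseCoprime_injective (d : ℕ) : Function.Injective (mulSelfReverseCoprime d) := by
  rintro ⟨⟨⟨i, j⟩, _⟩, ⟨g, hg⟩, ⟨v, hv⟩⟩ ⟨⟨⟨i', j'⟩, _⟩, ⟨g', hg'⟩, ⟨v', hv'⟩⟩ h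
  have hgv : g * v = g' * v' := congrArg Subtype.val h
  have gcd_eq {g v : (ZMod 2)[X]} (hg : g.reverse = g) (hv : IsCoprime v v.reverse) :
      gcd (g * v) (g * v).reverse = g := by
    rw [gcd_mul_reverse_of_reverse_eq hg, gcd_eq_one_iff_isCoprime.mpr hv, mul_one]
  obtain rfl : g = g' := by rw [← gcd_eq hg.2.2 hv.2.2, hgv, gcd_eq hg'.2.2 hv'.2.2]
  obtain rfl : v = v' := mul_left_cancel₀ (ne_zero_of_coeff_zero_eq_one hg.2.1) hgv
  obtain rfl : i = i' := hg.1.symm.trans hg'.1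
  obtain rfl : j = j' := hv.1.symm.trans hv'.1
  rfl

open Finset in
lemma mulSelfReverseCoprime_surjective (d : ℕ) :
    Function.Surjective (mulSelfReverseCoprime d) := by
  rintro ⟨u, hd, h0⟩
  obtain ⟨v, hv⟩ := gcd_dvd_left u u.reverse
  set g := gcd u u.reverse
  have hgr : g.reverse = g := reverse_gcd_self_reverse (by rw [h0]; exact one_ne_zero)
  have hgv0 : g.coeff 0 * v.coeff 0 = 1 := by rw [← mul_coeff_zero, ← hv, h0]
  have hg0 : g.coeff 0 = 1 := ZMod.eq_one_of_ne_zero_mod_two (left_ne_zero_of_mul_eq_one hgv0)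
  have hv0 : v.coeff 0 = 1 := ZMod.eq_one_of_ne_zero_mod_two (right_ne_zero_of_mul_eq_one hgv0)
  have hcop : IsCoprime v v.reverse := by
    refine gcd_eq_one_iff_isCoprime.mp (mul_left_cancel₀ (ne_zero_of_coeff_zero_eq_one hg0) ?_)
    rw [← gcd_mul_reverse_of_reverse_eq hgr, ← hv, mul_one]
  have hdeg : g.natDegree + v.natDegree = d := by
    rw [← natDegree_mul (ne_zero_of_coeff_zero_eq_one hg0) (ne_zero_of_coeff_zero_eq_one hv0),
      ← hv, hd]
  exact ⟨⟨⟨(g.natDegree, v.natDegree), mem_antidiagonal.mpr hdeg⟩,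
    ⟨g, rfl, hg0, hgr⟩, ⟨v, rfl, hv0, hcop⟩⟩, Subtype.ext hv.symm⟩

open Finset in
lemma card_constOneOfDegree_eq_sum (d : ℕ) :
    Nat.card (constOneOfDegree (ZMod 2) d) = ∑ p ∈ antidiagonal d,
      Nat.card (selfReverse (ZMod 2) p.1) * Nat.card (coprimeReverse (ZMod 2) p.2) := by
  rw [← Nat.card_eq_of_bijective _
    ⟨mulSelfReverseCoprime_injective d, mulSelfReverseCoprime_surjective d⟩, Nat.card_sigma]
  simp_rw [Nat.card_prod]
  exact sum_coe_sort (antidiagonal d) fun p ↦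
    Nat.card (selfReverse (ZMod 2) p.1) * Nat.card (coprimeReverse (ZMod 2) p.2)

end Polynomial

namespace PowerSeries

lemma mk_mul_one_add_X {R : Type*} [Ring R] (f : ℕ → R) :
    mk f * (1 + X) = mk fun n ↦ f n + if n = 0 then 0 else f (n - 1) := by
  ext n
  rcases n with _ | n <;> simp [mul_add, coeff_succ_mul_X]

lemma mk_mul_one_sub_two_X_sq {R : Type*} [CommRing R] (f : ℕ → R) :
    mk f * (1 - 2 * X ^ 2) = mk fun n ↦ f n - if n < 2 then 0 else 2 * f (n - 2) := by
  ext n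
  rw [mul_sub, mul_one, mul_left_comm, map_sub, ← map_ofNat (C (R := R)), coeff_C_mul,
    coeff_mul_X_pow']
  simp only [coeff_mk]
  split_ifs <;> first | rfl | omega | ring

end PowerSeries

def closedForm (d : ℕ) : ℤ :=
  if d = 0 then 1 else if d ≤ 2 then 0 else (2 ^ (d - 1) - 2 * (-1) ^ d) / 3

lemma closedForm_add_closedForm (n : ℕ) :
    closedForm (n + 4) + closedForm (n + 3) = 2 ^ (n + 2) := by
  obtain ⟨c, hc⟩ := sub_dvd_pow_sub_pow (2 : ℤ) (-1) n
  have h4 : (2 : ℤ) ^ (n + 3) - 2 * (-1) ^ (n + 4) = 3 * (2 * 2 ^ n + 2 * c) := by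
    linear_combination 2 * hc
  have h3 : (2 : ℤ) ^ (n + 2) - 2 * (-1) ^ (n + 3) = 3 * (2 * 2 ^ n - 2 * c) := by
    linear_combination (-2) * hc
  simp only [closedForm, if_neg (show n + 4 ≠ 0 by omega), if_neg (show n + 3 ≠ 0 by omega),
    if_neg (show ¬n + 4 ≤ 2 by omega), if_neg (show ¬n + 3 ≤ 2 by omega),
    Nat.add_succ_sub_one, h4, h3, Int.mul_ediv_cancel_left _ three_ne_zero]
  ring

namespace PowerSeries

lemma mk_closedForm_mul_one_add_X :
    mk closedForm * (1 + X) =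
      mk (fun d ↦ if d = 0 then 1 else 2 ^ (d - 1)) * (1 - 2 * X ^ 2) := by
  rw [mk_mul_one_add_X, mk_mul_one_sub_two_X_sq]
  ext n
  rcases n with _ | _ | _ | _ | n
  iterate 4 simp [closedForm]
  · simp only [coeff_mk, if_neg (show n + 4 ≠ 0 by omega), if_neg (show ¬n + 4 < 2 by omega),
      if_neg (show n + 4 - 2 ≠ 0 by omega)]
    change closedForm (n + 4) + closedForm (n + 3) = 2 ^ (n + 3) - 2 * 2 ^ (n + 1)
    rw [closedForm_add_closedForm]
    ring

lemma mk_card_selfReverse_mul :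
    mk (fun k ↦ (Nat.card (selfReverse (ZMod 2) k) : ℤ)) * (1 - 2 * X ^ 2) = 1 + X := by
  simp only [card_selfReverse, Nat.card_zmod, Nat.cast_pow, Nat.cast_ofNat]
  rw [mk_mul_one_sub_two_X_sq]
  ext n
  rcases n with _ | _ | n
  · simp
  · simp
  · simp [coeff_X, show (n + 1 + 1) / 2 = n / 2 + 1 by omega, pow_succ]
    ring

lemma mk_card_coprimeReverse_mul_one_add_X :
    mk (fun d ↦ (Nat.card (coprimeReverse (ZMod 2) d) : ℤ)) * (1 + X) =
      mk (fun d ↦ (Nat.card (constOneOfDegree (ZMod 2) d) : ℤ)) * (1 - 2 * X ^ 2) := by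
  have hconv : mk (fun k ↦ (Nat.card (selfReverse (ZMod 2) k) : ℤ)) *
      mk (fun d ↦ (Nat.card (coprimeReverse (ZMod 2) d) : ℤ)) =
        mk (fun d ↦ (Nat.card (constOneOfDegree (ZMod 2) d) : ℤ)) := by
    ext d
    rw [coeff_mul, coeff_mk, card_constOneOfDegree_eq_sum]
    push_cast
    simp only [coeff_mk]
  rw [← hconv, ← mk_card_selfReverse_mul]
  ring

lemma mk_card_constOneOfDegree :
    mk (fun d ↦ (Nat.card (constOneOfDegree (ZMod 2) d) : ℤ)) =
      mk (fun d ↦ if d = 0 then 1 else 2 ^ (d - 1)) := by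
  ext d
  simp only [coeff_mk, card_constOneOfDegree]
  split_ifs <;> simp

end PowerSeries

/-- The number of polynomials `u ∈ 𝔽₂[z]` of degree `d` with `u(0) = 1` that are coprime
to their reciprocal `ũ(z) = z^d u(1/z)` is `1` if `d = 0`, `0` if `d = 1, 2`, and
`(2^(d-1) - 2(-1)^d)/3` if `d ≥ 3`. -/
theorem stmt5 (d : ℕ) :
    (Nat.card {u : Polynomial (ZMod 2) //
        u.natDegree = d ∧ u.coeff 0 = 1 ∧ IsCoprime u u.reverse} : ℤ)
      = if d = 0 then 1 else if d ≤ 2 then 0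
        else (2 ^ (d - 1) - 2 * (-1) ^ d) / 3 := by
  have hX : (1 + PowerSeries.X : PowerSeries ℤ) ≠ 0 := fun h ↦ by
    simpa using congrArg PowerSeries.constantCoeff h
  have hA : PowerSeries.mk (fun d ↦ (Nat.card (coprimeReverse (ZMod 2) d) : ℤ)) =
      PowerSeries.mk closedForm := by
    refine mul_right_cancel₀ hX ?_
    rw [PowerSeries.mk_card_coprimeReverse_mul_one_add_X, PowerSeries.mk_card_constOneOfDegree,
      PowerSeries.mk_closedForm_mul_one_add_X]
  have h := congrArg (PowerSeries.coeff d) hA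
  rwa [PowerSeries.coeff_mk, PowerSeries.coeff_mk] at h
end

section
/- Let H(z) ∈ 𝔽₂[z] satisfy z^{2n−2} H(1/z) = H(z) (as Laurent polynomials), let n ≥ 3, and let α be a primitive element of 𝔽_{2^n}. If H(α) = 0 and deg H ≤ 2n−2, then H = 0. -/
open Polynomial Finset

/-!
Over `𝔽₂` the roots of `H` are closed under squaring, and the symmetry `z^(2n-2) H(1/z) = H(z)`
makes them closed under inversion. Hence `H` vanishes at the `n` conjugates `α^(2^i)` and at the
`n` conjugates `α^(-2^i)`. The two orbits are disjoint, because `2^n - 1` divides no sum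
`2^i + 2^j` with `i, j < n` once `n ≥ 3`. This gives `2n` roots, more than `deg H ≤ 2n - 2`.
-/

lemma two_pow_sub_one_not_dvd_two_pow_add_two_pow {n i j : ℕ} (hn : 3 ≤ n) (hi : i < n)
    (hj : j < n) : ¬ 2 ^ n - 1 ∣ 2 ^ i + 2 ^ j := by
  obtain ⟨m, rfl⟩ : ∃ m, n = m + 2 := ⟨n - 2, by omega⟩
  have hm : 2 ≤ 2 ^ m := Nat.le_self_pow (by omega) 2
  have hi' : 2 ^ i ≤ 2 ^ (m + 1) := Nat.pow_le_pow_right two_pos (by omega)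
  have hj' : 2 ^ j ≤ 2 ^ (m + 1) := Nat.pow_le_pow_right two_pos (by omega)
  rw [pow_succ] at hi' hj'
  rw [show 2 ^ (m + 2) = 4 * 2 ^ m by ring]
  by_cases hij : i = m + 1 ∧ j = m + 1
  · obtain ⟨rfl, rfl⟩ := hij
    rw [show 2 ^ (m + 1) + 2 ^ (m + 1) = (4 * 2 ^ m - 1) + 1 by rw [pow_succ]; omega,
      Nat.dvd_add_right dvd_rfl, Nat.dvd_one]
    omega
  · -- now `0 < 2^i + 2^j ≤ 2^m + 2 * 2^m < 2^n - 1`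
    have hsmall : 2 ^ i ≤ 2 ^ m ∨ 2 ^ j ≤ 2 ^ m := by
      rcases not_and_or.mp hij with h | h
      · exact .inl (Nat.pow_le_pow_right two_pos (by omega))
      · exact .inr (Nat.pow_le_pow_right two_pos (by omega))
    exact Nat.not_dvd_of_pos_of_lt (by positivity) (by omega)

lemma two_pow_sub_one_ne_zero {n : ℕ} (hn : n ≠ 0) : 2 ^ n - 1 ≠ 0 :=
  (Nat.sub_pos_of_lt (Nat.one_lt_two_pow hn)).ne'

lemma ne_zero_of_orderOf_ne_zero {M : Type*} [MonoidWithZero M] [Nontrivial M] {x : M}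
    (hx : orderOf x ≠ 0) : x ≠ 0 :=
  ne_of_apply_ne orderOf (by rwa [orderOf_zero])

lemma orderOf_inv₀ {M : Type*} [DivisionMonoid M] (x : M) : orderOf x⁻¹ = orderOf x := by
  simp [orderOf_eq_orderOf_iff]

section SquaringOrbit

variable {M : Type*} [DecidableEq M] {n : ℕ}

lemma card_image_pow_two_pow [Monoid M] {x : M} (hn : 2 ≤ n) (hx : orderOf x = 2 ^ n - 1) :
    #((range n).image fun i => x ^ 2 ^ i) = n := by
  have hlt : ∀ k ∈ range n, 2 ^ k < orderOf x := fun k hk => by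
    have : 2 ^ (k + 1) ≤ 2 ^ n := Nat.pow_le_pow_right two_pos (mem_range.mp hk)
    have : 2 ^ 2 ≤ 2 ^ n := Nat.pow_le_pow_right two_pos hn
    rw [pow_succ] at *
    omega
  rw [card_image_of_injOn, card_range]
  exact fun i hi j hj hij => Nat.pow_right_injective le_rfl
    (pow_injOn_Iio_orderOf (hlt i hi) (hlt j hj) hij)

lemma disjoint_image_pow_two_pow_inv [GroupWithZero M] {x : M} (hn : 3 ≤ n)
    (hx : orderOf x = 2 ^ n - 1) :
    Disjoint ((range n).image fun i => x ^ 2 ^ i) ((range n).image fun i => x⁻¹ ^ 2 ^ i) := by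
  have hx0 : x ≠ 0 := ne_zero_of_orderOf_ne_zero (hx ▸ two_pow_sub_one_ne_zero (by omega))
  simp only [disjoint_left, mem_image, mem_range, not_exists, not_and, forall_exists_index,
    and_imp]
  rintro _ i hi rfl j hj hij
  have : x ^ (2 ^ i + 2 ^ j) = 1 := by
    rw [pow_add, ← hij, inv_pow, inv_mul_cancel₀ (pow_ne_zero _ hx0)]
  exact two_pow_sub_one_not_dvd_two_pow_add_two_pow hn hi hj (hx ▸ orderOf_dvd_of_pow_eq_one this)

end SquaringOrbit

lemma aeval_pow_card_pow {K A : Type*} [Field K] [Fintype K] [Semiring A] [Algebra K A]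
    (f : K[X]) (x : A) (i : ℕ) :
    aeval (x ^ Fintype.card K ^ i) f = aeval x f ^ Fintype.card K ^ i := by
  induction i with
  | zero => simp
  | succ i ih =>
    rw [pow_succ, pow_mul, pow_mul, ← expand_aeval, FiniteField.expand_card, map_pow, ih]

lemma aeval_inv_eq_zero_of_reflect_eq {R K : Type*} [CommSemiring R] [Field K] [Algebra R K]
    {f : R[X]} {N : ℕ} (hdeg : f.natDegree ≤ N) (hrefl : f.reflect N = f) {x : K} (hx0 : x ≠ 0)
    (hx : aeval x f = 0) : aeval x⁻¹ f = 0 := by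
  have : Invertible x := invertibleOfNonzero hx0
  rw [← invOf_eq_inv, aeval_def, ← hrefl]
  exact (eval₂_reflect_eq_zero_iff _ _ N f hdeg).mpr hx

theorem stmt10_general {n : ℕ} (hn : 3 ≤ n) (F : Type*) [Field F]
    [Algebra (ZMod 2) F]
    (α : F) (hα : orderOf α = 2 ^ n - 1)
    (H : Polynomial (ZMod 2))
    (hdeg : H.natDegree ≤ 2 * n - 2)
    (hrec : H.reflect (2 * n - 2) = H)
    (hroot : aeval α H = 0) :
    H = 0 := by
  classical
  have hα0 : α ≠ 0 := ne_zero_of_orderOf_ne_zero (hα ▸ two_pow_sub_one_ne_zero (by omega))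
  have hroot_inv : aeval α⁻¹ H = 0 := aeval_inv_eq_zero_of_reflect_eq hdeg hrec hα0 hroot
  set orbit := fun x : F => (range n).image fun i => x ^ 2 ^ i
  have hroots : ∀ x ∈ orbit α ∪ orbit α⁻¹, (H.map (algebraMap (ZMod 2) F)).eval x = 0 := by
    simp only [orbit, mem_union, mem_image, mem_range, eval_map_algebraMap]
    rintro _ (⟨i, -, rfl⟩ | ⟨i, -, rfl⟩)
    · simpa [ZMod.card, hroot] using aeval_pow_card_pow H α i
    · simpa [ZMod.card, hroot_inv] using aeval_pow_card_pow H α⁻¹ i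
  have hcard : #(orbit α ∪ orbit α⁻¹) = 2 * n := by
    rw [card_union_of_disjoint (disjoint_image_pow_two_pow_inv hn hα),
      card_image_pow_two_pow (by omega) hα,
      card_image_pow_two_pow (by omega) ((orderOf_inv₀ α).trans hα), two_mul]
  rw [← Polynomial.map_eq_zero_iff (algebraMap (ZMod 2) F).injective]
  refine eq_zero_of_natDegree_lt_card_of_eval_eq_zero' _ _ hroots ?_
  have := natDegree_map_le (f := algebraMap (ZMod 2) F) (p := H)
  omega

/-- Let `n ≥ 3` and `α` a primitive element of `𝔽_{2^n}`. If `H ∈ 𝔽₂[z]` satisfies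
`z^(2n−2) H(1/z) = H(z)` (i.e. `reflect (2n−2) H = H`), `deg H ≤ 2n−2`, and `H(α) = 0`,
then `H = 0`. -/
theorem stmt10 {n : ℕ} (hn : 3 ≤ n) (F : Type*) [Field F] [Fintype F]
    [Algebra (ZMod 2) F] (hcard : Fintype.card F = 2 ^ n)
    (α : F) (hα : orderOf α = 2 ^ n - 1)
    (H : Polynomial (ZMod 2))
    (hdeg : H.natDegree ≤ 2 * n - 2)
    (hrec : H.reflect (2 * n - 2) = H)
    (hroot : aeval α H = 0) :
    H = 0 :=
  stmt10_general hn F α hα H hdeg hrec hroot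
end
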